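/- The singlet state violates the CHSH bound: there exist unit vectors a, a', b, b' ∈ ℝ³ such that |ω_B((a·σ)⊗(b·σ)) + ω_B((a·σ)⊗(b'·σ)) + ω_B((a'·σ)⊗(b·σ)) − ω_B((a'·σ)⊗(b'·σ))| = 2√2 > 2. -/

import Mathlib

noncomputable section
open Matrix ComplexConjugate
open scoped Kronecker ComplexOrder

abbrev M2 := Matrix (Fin 2) (Fin 2) ℂ
abbrev M4 := Matrix (Fin 2 × Fin 2) (Fin 2 × Fin 2) ℂ

def ketP : Fin 2 → ℂ := ![1, 0]
def ketM : Fin 2 → ℂ := ![0, 1]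

def tens (u v : Fin 2 → ℂ) : Fin 2 × Fin 2 → ℂ := fun p => u p.1 * v p.2

def singlet : Fin 2 × Fin 2 → ℂ :=
  ((Real.sqrt 2 : ℂ))⁻¹ • (tens ketP ketM - tens ketM ketP)

def expval (A : M4) (ψ : Fin 2 × Fin 2 → ℂ) : ℂ := star ψ ⬝ᵥ A.mulVec ψ

def σ1 : M2 := !![0, 1; 1, 0]
def σ2 : M2 := !![0, -Complex.I; Complex.I, 0]
def σ3 : M2 := !![1, 0; 0, -1]

def nsigma (n : Fin 3 → ℝ) : M2 := (n 0 : ℂ) • σ1 + (n 1 : ℂ) • σ2 + (n 2 : ℂ) • σ3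

def IsUnitVec (n : Fin 3 → ℝ) : Prop := (n 0)^2 + (n 1)^2 + (n 2)^2 = 1

lemma expval_eq (a b : Fin 3 → ℝ) :
    expval (nsigma a ⊗ₖ nsigma b) singlet
      = -((a 0 * b 0 : ℝ) + (a 1 * b 1 : ℝ) + (a 2 * b 2 : ℝ)) := by
  have h2 : ((Real.sqrt 2 : ℂ))⁻¹ * ((Real.sqrt 2 : ℂ))⁻¹ = (2 : ℂ)⁻¹ := by
    rw [← mul_inv, ← Complex.ofReal_mul, Real.mul_self_sqrt (by norm_num)]; norm_num
  simp only [expval, singlet, nsigma, tens, ketP, ketM, σ1, σ2, σ3, dotProduct,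
    Matrix.mulVec, Fintype.sum_prod_type, Fin.sum_univ_two, kroneckerMap_apply,
    Pi.star_apply, Pi.smul_apply, Pi.sub_apply, smul_eq_mul, Matrix.add_apply, Matrix.smul_apply,
    Matrix.of_apply, Matrix.cons_val', Matrix.cons_val_zero, Matrix.cons_val_one,
    Matrix.head_cons, Matrix.empty_val', Matrix.cons_val_fin_one, Matrix.head_fin_const,
    star_mul', star_sub, RCLike.star_def, _root_.map_one, _root_.map_zero, Complex.I_sq, map_inv₀, Complex.conj_ofReal]
  push_cast
  linear_combination (-2*((a 0*b 0 + a 1*b 1 + a 2*b 2 : ℂ))) * h2 + (((Real.sqrt 2:ℂ))⁻¹^2 * (a 1) * (b 1) * 2) * Complex.I_sq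

/-- The singlet state violates the CHSH bound: there are unit vectors a, a', b, b'
with CHSH combination of absolute value 2√2 > 2. -/
theorem singlet_violates_CHSH :
    ∃ a a' b b' : Fin 3 → ℝ, IsUnitVec a ∧ IsUnitVec a' ∧ IsUnitVec b ∧ IsUnitVec b' ∧
      ‖(expval (nsigma a ⊗ₖ nsigma b) singlet
        + expval (nsigma a ⊗ₖ nsigma b') singlet
        + expval (nsigma a' ⊗ₖ nsigma b) singlet
        - expval (nsigma a' ⊗ₖ nsigma b') singlet)‖ = 2 * Real.sqrt 2 ∧
      (2 : ℝ) < 2 * Real.sqrt 2 := by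
  have h2 : Real.sqrt 2 * Real.sqrt 2 = 2 := Real.mul_self_sqrt (by norm_num)
  have hs : (Real.sqrt 2)⁻¹ ^ 2 = 2⁻¹ := by rw [inv_pow, sq, h2]
  have hpos : (0:ℝ) < Real.sqrt 2 := Real.sqrt_pos.mpr (by norm_num)
  refine ⟨![1,0,0], ![0,0,1], ![-(Real.sqrt 2)⁻¹, 0, -(Real.sqrt 2)⁻¹],
    ![-(Real.sqrt 2)⁻¹, 0, (Real.sqrt 2)⁻¹], ?_, ?_, ?_, ?_, ?_, ?_⟩
  · simp [IsUnitVec]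
  · simp [IsUnitVec]
  · simp only [IsUnitVec, Matrix.cons_val_zero, Matrix.cons_val_one, Matrix.head_cons,
      Matrix.cons_val_two, Matrix.tail_cons]
    nlinarith [hs]
  · simp only [IsUnitVec, Matrix.cons_val_zero, Matrix.cons_val_one, Matrix.head_cons,
      Matrix.cons_val_two, Matrix.tail_cons]
    nlinarith [hs]
  · rw [expval_eq, expval_eq, expval_eq, expval_eq]
    simp only [Matrix.cons_val_zero, Matrix.cons_val_one, Matrix.head_cons,
      Matrix.cons_val_two, Matrix.tail_cons]
    have key : 4 * (Real.sqrt 2)⁻¹ = 2 * Real.sqrt 2 := by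
      field_simp
      linarith [h2]
    push_cast
    rw [show (-(1 * -((Real.sqrt 2:ℂ))⁻¹ + 0 * 0 + 0 * -((Real.sqrt 2:ℂ))⁻¹)
        + -(1 * -((Real.sqrt 2:ℂ))⁻¹ + 0 * 0 + 0 * ((Real.sqrt 2:ℂ))⁻¹)
        + -(0 * -((Real.sqrt 2:ℂ))⁻¹ + 0 * 0 + 1 * -((Real.sqrt 2:ℂ))⁻¹)
        - -(0 * -((Real.sqrt 2:ℂ))⁻¹ + 0 * 0 + 1 * ((Real.sqrt 2:ℂ))⁻¹))
        = ((4 * (Real.sqrt 2)⁻¹ : ℝ) : ℂ) from by push_cast; ring]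
    rw [Complex.norm_real, Real.norm_eq_abs, abs_of_nonneg (by positivity), key]
  · nlinarith [h2, hpos]
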